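/- Correspondence of minimizers: with q* = M(r*), the function q* minimizes L^ARM over all q : 𝒮 × 𝒜 → ℝ if and only if r* minimizes r ↦ L^EBM(R_r) over all r : 𝒮 × 𝒜 → ℝ; moreover either condition implies that R_{r*} minimizes L^EBM over all R : 𝒳 × 𝒴 → ℝ. -/

import Mathlib

open Finset

/-! Prompts in a finite set `X`; contexts are a prompt together with fewer than `T`
appended vocabulary tokens; finished responses are such token prefixes followed by
`EOS` (encoded as `none : Option V`). -/

/-- Vocabulary part of a finished response (the response is this prefix followed by EOS). -/
abbrev Resp (V : Type) (T : ℕ) := Σ t : Fin T, Fin (t : ℕ) → V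

/-- Contexts: a prompt extended by fewer than `T` vocabulary tokens. -/
abbrev Ctx (X V : Type) (T : ℕ) := X × Resp V T

/-- Admissible next tokens at a context: only `EOS` (= `none`) at maximal contexts. -/
def adm (X V : Type) [Fintype V] (T : ℕ) (s : Ctx X V T) : Finset (Option V) :=
  if (s.2.1 : ℕ) + 1 = T then {none} else Finset.univ

/-- Soft value `V_q(s) = log ∑_{j admissible at s} exp q(s, j)`. -/
noncomputable def Vq (X V : Type) [Fintype V] (T : ℕ)
    (q : Ctx X V T × Option V → ℝ) (s : Ctx X V T) : ℝ :=
  Real.log (∑ a ∈ adm X V T s, Real.exp (q (s, a)))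

/-- Next-token policy `π_q(j | s) = exp (q(s,j) - V_q(s))`. -/
noncomputable def piq (X V : Type) [Fintype V] (T : ℕ)
    (q : Ctx X V T × Option V → ℝ) (s : Ctx X V T) (a : Option V) : ℝ :=
  Real.exp (q (s, a) - Vq X V T q s)

/-- The strict prefix of length `i` of a finished response `y`. -/
def pref (V : Type) (T : ℕ) (y : Resp V T) (i : Fin (y.1 : ℕ)) : Resp V T :=
  ⟨⟨(i : ℕ), lt_trans i.isLt y.1.isLt⟩, fun j => y.2 (Fin.castLE (le_of_lt i.isLt) j)⟩

/-- The mapping `M` (backward recursion), as a function of the depth of the context. -/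
noncomputable def Mgo (X V : Type) [Fintype V] (T : ℕ) (r : Ctx X V T × Option V → ℝ)
    (x : X) (t : ℕ) (ht : t < T) (s : Fin t → V) (a : Option V) : ℝ :=
  match a with
  | none => r ((x, ⟨⟨t, ht⟩, s⟩), none)
  | some v =>
    r ((x, ⟨⟨t, ht⟩, s⟩), some v) +
      if h : t + 1 < T then
        Real.log (∑ b ∈ adm X V T (x, ⟨⟨t + 1, h⟩, Fin.snoc s v⟩),
          Real.exp (Mgo X V T r x (t + 1) h (Fin.snoc s v) b))
      else 0
termination_by T - t
decreasing_by omega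

/-- The mapping `q = M(r)`: `q(s, EOS) = r(s, EOS)` and
`q(s, y) = r(s, y) + V_q(s ⊕ y)` for a vocabulary token `y`. -/
noncomputable def Mmap (X V : Type) [Fintype V] (T : ℕ)
    (r : Ctx X V T × Option V → ℝ) : Ctx X V T × Option V → ℝ :=
  fun p => Mgo X V T r p.1.1 (p.1.2.1 : ℕ) p.1.2.1.isLt p.1.2.2 p.2

/-- Autoregressive probability `p^ARM_q(y | x)` of the finished response `y ⊕ EOS`. -/
noncomputable def pARM (X V : Type) [Fintype V] (T : ℕ)
    (q : Ctx X V T × Option V → ℝ) (x : X) (y : Resp V T) : ℝ :=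
  (∏ i : Fin (y.1 : ℕ), piq X V T q (x, pref V T y i) (some (y.2 i))) *
    piq X V T q (x, y) none

/-- Negative log-likelihood of the ARM. -/
noncomputable def lARM (X V : Type) [Fintype V] (T : ℕ)
    (q : Ctx X V T × Option V → ℝ) (x : X) (y : Resp V T) : ℝ :=
  - Real.log (pARM X V T q x y)

/-- Sequence-level log-partition `A^EBM_R(x)` of a sequence-level reward `R`. -/
noncomputable def Aebm (X V : Type) [Fintype V] (T : ℕ)
    (R : X × Resp V T → ℝ) (x : X) : ℝ :=
  Real.log (∑ y : Resp V T, Real.exp (R (x, y)))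

/-- Negative log-likelihood `ℓ^EBM_R(x, y) = A^EBM_R(x) - R(x, y)` of the EBM. -/
noncomputable def lEBM (X V : Type) [Fintype V] (T : ℕ)
    (R : X × Resp V T → ℝ) (x : X) (y : Resp V T) : ℝ :=
  Aebm X V T R x - R (x, y)

/-- Decomposable sequence-level reward `R_r(x, y) = ∑_t r(x ⊕ y_{<t}, y_t)`. -/
noncomputable def Rr (X V : Type) [Fintype V] (T : ℕ)
    (r : Ctx X V T × Option V → ℝ) : X × Resp V T → ℝ :=
  fun p =>
    (∑ i : Fin (p.2.1 : ℕ), r ((p.1, pref V T p.2 i), some (p.2.2 i))) + r ((p.1, p.2), none)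

/-- Expected ARM risk under the data distribution `ρ`. -/
noncomputable def LARM (X V : Type) [Fintype X] [Fintype V] (T : ℕ)
    (ρ : X × Resp V T → ℝ) (q : Ctx X V T × Option V → ℝ) : ℝ :=
  ∑ p : X × Resp V T, ρ p * lARM X V T q p.1 p.2

/-- Expected EBM risk under the data distribution `ρ`. -/
noncomputable def LEBM (X V : Type) [Fintype X] [Fintype V] (T : ℕ)
    (ρ : X × Resp V T → ℝ) (R : X × Resp V T → ℝ) : ℝ :=
  ∑ p : X × Resp V T, ρ p * lEBM X V T R p.1 p.2

/-! Along `M` the two risks coincide pointwise. Telescoping the soft values of `q = M(r)` along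
a response gives `ℓ^ARM_q(x, y) = V_q(x) - R_r(x, y)`, and backward induction over the prefix
tree shows that `exp V_q(s)`, rescaled by the reward collected on the way to `s`, is the sum of
`exp R_r(x, y)` over the finished responses `y` extending `s`; at the root this is
`V_q(x) = A^EBM_{R_r}(x)`. So `L^ARM ∘ M = L^EBM ∘ R_·`. Both maps are onto: every `q` solves
the soft Bellman equations of `r(s, j) = q(s, j) - V_q(s ⊕ j)`, whose only solution is `M(r)`,
and every `R` is `R_r` for the `r` that puts all reward on `EOS`. Hence minimizing over `q`,
over `r`, or over `R` are the same problem. -/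

theorem List.append_singleton_prefix_iff {α : Type*} {l m : List α} {a : α} :
    l ++ [a] <+: m ↔ l <+: m ∧ m[l.length]? = some a := by
  constructor
  · intro h
    refine ⟨(List.prefix_append l [a]).trans h, ?_⟩
    obtain ⟨t, rfl⟩ := h
    simp
  · rintro ⟨h, ha⟩
    rw [List.prefix_iff_eq_take] at h
    have htake : m.take (l.length + 1) = l ++ [a] := by rw [List.take_add_one, ← h, ha]; rfl
    exact htake ▸ List.take_prefix _ _

namespace Resp

variable {V : Type} {T : ℕ}

def toList (y : Resp V T) : List V := List.ofFn y.2

@[simp]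
theorem length_toList (y : Resp V T) : y.toList.length = y.1 := List.length_ofFn

theorem toList_injective : Function.Injective (toList : Resp V T → List V) := by
  rintro ⟨⟨a, ha⟩, f⟩ ⟨⟨b, hb⟩, g⟩ h
  obtain ⟨⟩ := List.ofFn_inj'.mp h
  rfl

def snoc (s : Resp V T) (v : V) (h : (s.1 : ℕ) + 1 < T) : Resp V T :=
  ⟨⟨s.1 + 1, h⟩, Fin.snoc s.2 v⟩

theorem toList_snoc (s : Resp V T) (v : V) (h : (s.1 : ℕ) + 1 < T) :
    (s.snoc v h).toList = s.toList ++ [v] := by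
  simp only [snoc, toList, List.ofFn_succ', Fin.snoc_castSucc, Fin.snoc_last,
    List.concat_eq_append]

-- Truncation to `min k y.1` tokens: total in `k`, so that soft values along `y` telescope.
def take (y : Resp V T) (k : ℕ) : Resp V T :=
  ⟨⟨min k y.1, (min_le_right _ _).trans_lt y.1.isLt⟩, Fin.take _ (min_le_right _ _) y.2⟩

theorem toList_take (y : Resp V T) (k : ℕ) : (y.take k).toList = y.toList.take k := by
  rw [toList, take, Fin.ofFn_take_eq_take_ofFn, ← toList, List.take_eq_take_iff]
  simp

theorem pref_eq_take (y : Resp V T) (i : Fin y.1) : pref V T y i = y.take i :=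
  toList_injective <| by
    rw [toList_take]
    exact Fin.ofFn_take_eq_take_ofFn (m := i) _ y.2

theorem take_self (y : Resp V T) : y.take y.1 = y :=
  toList_injective <| by rw [toList_take, List.take_of_length_le (by simp)]

theorem pref_snoc (y : Resp V T) (i : Fin y.1) (h : ((pref V T y i).1 : ℕ) + 1 < T) :
    (pref V T y i).snoc (y.2 i) h = y.take (i + 1) :=
  toList_injective <| by
    rw [toList_snoc, pref_eq_take, toList_take, toList_take]
    simpa [toList] using List.take_concat_get' y.toList i (by simp)

theorem pref_snoc_castSucc (s : Resp V T) (v : V) (h : (s.1 : ℕ) + 1 < T) (i : Fin s.1) :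
    pref V T (s.snoc v h) i.castSucc = pref V T s i :=
  (pref_eq_take _ _).trans <| .trans (toList_injective <| by
    rw [toList_take, toList_take, toList_snoc,
      List.take_append_of_le_length (by simp [i.isLt.le]), Fin.val_castSucc])
    (pref_eq_take s i).symm

theorem pref_snoc_last (s : Resp V T) (v : V) (h : (s.1 : ℕ) + 1 < T) :
    pref V T (s.snoc v h) (Fin.last s.1) = s :=
  (pref_eq_take _ _).trans <| toList_injective <| by
    rw [toList_take, toList_snoc, Fin.val_last, List.take_left' (by simp)]

def IsPrefix (s y : Resp V T) : Prop := s.toList <+: y.toList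

instance [DecidableEq V] (s y : Resp V T) : Decidable (s.IsPrefix y) :=
  inferInstanceAs (Decidable (_ <+: _))

theorem IsPrefix.refl (s : Resp V T) : s.IsPrefix s := List.prefix_refl _

theorem IsPrefix.length_le {s y : Resp V T} (h : s.IsPrefix y) : (s.1 : ℕ) ≤ y.1 := by
  simpa using List.IsPrefix.length_le h

theorem IsPrefix.eq_of_length_le {s y : Resp V T} (h : s.IsPrefix y) (hl : (y.1 : ℕ) ≤ s.1) :
    y = s :=
  toList_injective (List.IsPrefix.eq_of_length h (by simp [le_antisymm h.length_le hl])).symm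

theorem isPrefix_of_length_eq_zero {s : Resp V T} (hs : (s.1 : ℕ) = 0) (y : Resp V T) :
    s.IsPrefix y := by
  rw [IsPrefix, List.eq_nil_of_length_eq_zero (l := s.toList) (by simpa using hs)]
  exact List.nil_prefix

theorem snoc_isPrefix_iff {s y : Resp V T} {v : V} {h : (s.1 : ℕ) + 1 < T} :
    (s.snoc v h).IsPrefix y ↔ s.IsPrefix y ∧ y.toList[(s.1 : ℕ)]? = some v := by
  rw [IsPrefix, toList_snoc, List.append_singleton_prefix_iff, length_toList, IsPrefix]

theorem sum_isPrefix_of_lt [Fintype V] [DecidableEq V] {M : Type*} [AddCommMonoid M]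
    (f : Resp V T → M) (s : Resp V T) (h : (s.1 : ℕ) + 1 < T) :
    ∑ y with s.IsPrefix y, f y = f s + ∑ v, ∑ y with (s.snoc v h).IsPrefix y, f y := by
  -- split the extensions of `s` by their next token, `none` meaning that `y = s`
  rw [← Finset.sum_fiberwise _ (fun y => y.toList[(s.1 : ℕ)]?), Fintype.sum_option]
  congr 1
  · have hstop : ({y | s.IsPrefix y} : Finset (Resp V T)).filter
        (fun y => y.toList[(s.1 : ℕ)]? = none) = {s} := by
      ext y
      simp only [Finset.mem_filter, Finset.mem_univ, true_and, Finset.mem_singleton,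
        List.getElem?_eq_none_iff, length_toList]
      constructor
      · rintro ⟨hp, hl⟩
        exact hp.eq_of_length_le hl
      · rintro rfl
        exact ⟨IsPrefix.refl _, le_rfl⟩
    rw [hstop, Finset.sum_singleton]
  · congr! 2 with v
    ext y
    simp [snoc_isPrefix_iff]

theorem filter_isPrefix_of_not_lt [Fintype V] [DecidableEq V] (s : Resp V T)
    (h : ¬ (s.1 : ℕ) + 1 < T) :
    ({y | s.IsPrefix y} : Finset (Resp V T)) = {s} := by
  ext y
  simp only [Finset.mem_filter, Finset.mem_univ, true_and, Finset.mem_singleton]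
  constructor
  · intro hp
    exact hp.eq_of_length_le (by omega)
  · rintro rfl
    exact IsPrefix.refl _

end Resp

section SoftValue

variable {X V : Type} [Fintype V] {T : ℕ}

theorem adm_of_lt {s : Ctx X V T} (h : (s.2.1 : ℕ) + 1 < T) : adm X V T s = univ :=
  if_neg h.ne

theorem adm_of_not_lt {s : Ctx X V T} (h : ¬ (s.2.1 : ℕ) + 1 < T) : adm X V T s = {none} :=
  if_pos (by have := s.2.1.isLt; omega)

theorem exp_Vq (q : Ctx X V T × Option V → ℝ) (s : Ctx X V T) :
    Real.exp (Vq X V T q s) = ∑ a ∈ adm X V T s, Real.exp (q (s, a)) := by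
  refine Real.exp_log (Finset.sum_pos (fun _ _ => Real.exp_pos _) ⟨none, ?_⟩)
  unfold adm
  split_ifs <;> simp

theorem Mmap_none (r : Ctx X V T × Option V → ℝ) (s : Ctx X V T) :
    Mmap X V T r (s, none) = r (s, none) := by
  rw [Mmap]
  dsimp only
  rw [Mgo]

theorem Mmap_some (r : Ctx X V T × Option V → ℝ) (s : Ctx X V T) (v : V) :
    Mmap X V T r (s, some v) = r (s, some v) +
      if h : (s.2.1 : ℕ) + 1 < T then Vq X V T (Mmap X V T r) (s.1, s.2.snoc v h) else 0 := by
  rw [Mmap]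
  dsimp only
  rw [Mgo]
  rfl

theorem Mmap_some_of_lt (r : Ctx X V T × Option V → ℝ) (s : Ctx X V T) (v : V)
    (h : (s.2.1 : ℕ) + 1 < T) :
    Mmap X V T r (s, some v) = r (s, some v) + Vq X V T (Mmap X V T r) (s.1, s.2.snoc v h) := by
  rw [Mmap_some, dif_pos h]

theorem eq_Mmap_of_bellman {r q : Ctx X V T × Option V → ℝ}
    (hnone : ∀ s, q (s, none) = r (s, none))
    (hsome : ∀ s v, q (s, some v) = r (s, some v) +
      if h : (s.2.1 : ℕ) + 1 < T then Vq X V T q (s.1, s.2.snoc v h) else 0) :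
    ∀ p, q p = Mmap X V T r p
  | (s, none) => by rw [hnone, Mmap_none]
  | (s, some v) => by
    rw [hsome, Mmap_some]
    split_ifs with h
    · have hV : Vq X V T q (s.1, s.2.snoc v h) =
          Vq X V T (Mmap X V T r) (s.1, s.2.snoc v h) := by
        simp only [Vq]
        congr 1
        exact Finset.sum_congr rfl fun a _ => by
          rw [eq_Mmap_of_bellman hnone hsome ((s.1, s.2.snoc v h), a)]
      rw [hV]
    · rfl
termination_by p => T - p.1.2.1
decreasing_by simp only [Resp.snoc]; omega

theorem Mmap_surjective : Function.Surjective (Mmap X V T) := by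
  intro q
  refine ⟨fun p => p.2.elim (q (p.1, none)) fun v => q (p.1, some v) -
      if h : (p.1.2.1 : ℕ) + 1 < T then Vq X V T q (p.1.1, p.1.2.snoc v h) else 0,
    (funext (eq_Mmap_of_bellman (fun _ => ?_) fun _ _ => ?_)).symm⟩
  · rfl
  · exact (sub_add_cancel _ _).symm

theorem Rr_surjective : Function.Surjective (Rr X V T) := fun R =>
  ⟨fun p => p.2.elim (R p.1) fun _ => 0, funext fun p => by simp [Rr]⟩

end SoftValue

section PrefixReward

variable {X V : Type} {T : ℕ}

noncomputable def prefixReward (r : Ctx X V T × Option V → ℝ) (x : X) (s : Resp V T) : ℝ :=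
  ∑ i : Fin s.1, r ((x, pref V T s i), some (s.2 i))

theorem Rr_eq_prefixReward_add [Fintype V] (r : Ctx X V T × Option V → ℝ) (x : X)
    (y : Resp V T) :
    Rr X V T r (x, y) = prefixReward r x y + r ((x, y), none) := rfl

theorem prefixReward_snoc (r : Ctx X V T × Option V → ℝ) (x : X) (s : Resp V T) (v : V)
    (h : (s.1 : ℕ) + 1 < T) :
    prefixReward r x (s.snoc v h) = prefixReward r x s + r ((x, s), some v) := by
  change ∑ i : Fin ((s.1 : ℕ) + 1),
    r ((x, pref V T (s.snoc v h) i), some (Fin.snoc (α := fun _ => V) s.2 v i)) = _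
  rw [Fin.sum_univ_castSucc]
  simp only [Resp.pref_snoc_castSucc, Resp.pref_snoc_last, Fin.snoc_castSucc, Fin.snoc_last]
  rfl

theorem prefixReward_of_length_eq_zero (r : Ctx X V T × Option V → ℝ) (x : X) {s : Resp V T}
    (hs : (s.1 : ℕ) = 0) : prefixReward r x s = 0 := by
  obtain ⟨⟨_ | _, _⟩, _⟩ := s
  · simp [prefixReward]
  · simp at hs

end PrefixReward

section Likelihood

variable {X V : Type} [Fintype V] {T : ℕ}

theorem sum_exp_Rr_isPrefix [DecidableEq V] (r : Ctx X V T × Option V → ℝ) (x : X)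
    (s : Resp V T) :
    ∑ y with s.IsPrefix y, Real.exp (Rr X V T r (x, y)) =
      Real.exp (prefixReward r x s + Vq X V T (Mmap X V T r) (x, s)) := by
  rw [Real.exp_add, exp_Vq]
  by_cases h : (s.1 : ℕ) + 1 < T
  · have hchild : ∀ v, ∑ y with (s.snoc v h).IsPrefix y, Real.exp (Rr X V T r (x, y)) =
        Real.exp (prefixReward r x s) * Real.exp (Mmap X V T r ((x, s), some v)) := by
      intro v
      rw [sum_exp_Rr_isPrefix r x (s.snoc v h), prefixReward_snoc, Mmap_some_of_lt _ _ _ h]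
      simp only [Real.exp_add]
      ring
    rw [Resp.sum_isPrefix_of_lt _ s h, adm_of_lt (s := (x, s)) h, Fintype.sum_option,
      Mmap_none, Rr_eq_prefixReward_add, Real.exp_add]
    simp only [hchild, ← Finset.mul_sum, mul_add]
  · rw [Resp.filter_isPrefix_of_not_lt s h, adm_of_not_lt (s := (x, s)) h, Finset.sum_singleton,
      Finset.sum_singleton, Mmap_none, Rr_eq_prefixReward_add, Real.exp_add]
termination_by T - s.1
decreasing_by simp only [Resp.snoc]; omega

theorem Aebm_Rr (r : Ctx X V T × Option V → ℝ) (x : X) {s : Resp V T} (hs : (s.1 : ℕ) = 0) :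
    Aebm X V T (Rr X V T r) x = Vq X V T (Mmap X V T r) (x, s) := by
  classical
  have hsum := sum_exp_Rr_isPrefix r x s
  rw [Finset.filter_true_of_mem fun y _ => Resp.isPrefix_of_length_eq_zero hs y,
    prefixReward_of_length_eq_zero r x hs, zero_add] at hsum
  rw [Aebm, hsum, Real.log_exp]

theorem lARM_eq_sum (q : Ctx X V T × Option V → ℝ) (x : X) (y : Resp V T) :
    lARM X V T q x y =
      ∑ i : Fin y.1, (Vq X V T q (x, pref V T y i) - q ((x, pref V T y i), some (y.2 i))) +
        (Vq X V T q (x, y) - q ((x, y), none)) := by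
  simp only [lARM, pARM, piq, ← Real.exp_sum, ← Real.exp_add, Real.log_exp, neg_add,
    ← Finset.sum_neg_distrib, neg_sub]

theorem lARM_Mmap (r : Ctx X V T × Option V → ℝ) (x : X) (y : Resp V T) :
    lARM X V T (Mmap X V T r) x y = lEBM X V T (Rr X V T r) x y := by
  set φ : ℕ → ℝ := fun k => Vq X V T (Mmap X V T r) (x, y.take k)
  have hstep : ∀ i : Fin y.1,
      Vq X V T (Mmap X V T r) (x, pref V T y i) -
          Mmap X V T r ((x, pref V T y i), some (y.2 i)) =
        φ i - φ (i + 1) - r ((x, pref V T y i), some (y.2 i)) := by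
    intro i
    have h : ((pref V T y i).1 : ℕ) + 1 < T := lt_of_le_of_lt i.isLt y.1.isLt
    rw [Mmap_some_of_lt r _ _ h, Resp.pref_snoc, Resp.pref_eq_take]
    ring
  have hφ0 : φ 0 = Aebm X V T (Rr X V T r) x := (Aebm_Rr r x (by simp [Resp.take])).symm
  have hφτ : φ y.1 = Vq X V T (Mmap X V T r) (x, y) := by simp only [φ, Resp.take_self]
  rw [lARM_eq_sum, Finset.sum_congr rfl fun i _ => hstep i, Finset.sum_sub_distrib,
    Fin.sum_univ_eq_sum_range (fun k => φ k - φ (k + 1)), Finset.sum_range_sub', hφ0, hφτ,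
    Mmap_none, lEBM, Rr_eq_prefixReward_add, prefixReward]
  ring

theorem LARM_Mmap [Fintype X] (ρ : X × Resp V T → ℝ) (r : Ctx X V T × Option V → ℝ) :
    LARM X V T ρ (Mmap X V T r) = LEBM X V T ρ (Rr X V T r) := by
  simp only [LARM, LEBM, lARM_Mmap]

end Likelihood

theorem correspondence_of_minimizers_general (X V : Type) [Fintype X] [Fintype V] (T : ℕ)
    (ρ : X × Resp V T → ℝ)
    (rstar qstar : Ctx X V T × Option V → ℝ) (hqstar : qstar = Mmap X V T rstar) :
    ((∀ q : Ctx X V T × Option V → ℝ, LARM X V T ρ qstar ≤ LARM X V T ρ q) ↔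
      (∀ r : Ctx X V T × Option V → ℝ,
        LEBM X V T ρ (Rr X V T rstar) ≤ LEBM X V T ρ (Rr X V T r))) ∧
    ((∀ q : Ctx X V T × Option V → ℝ, LARM X V T ρ qstar ≤ LARM X V T ρ q) →
      ∀ R : X × Resp V T → ℝ, LEBM X V T ρ (Rr X V T rstar) ≤ LEBM X V T ρ R) := by
  have hmin : (∀ q, LARM X V T ρ qstar ≤ LARM X V T ρ q) ↔
      ∀ r, LEBM X V T ρ (Rr X V T rstar) ≤ LEBM X V T ρ (Rr X V T r) := by
    rw [Mmap_surjective.forall, hqstar]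
    simp only [LARM_Mmap]
  exact ⟨hmin, fun hq => Rr_surjective.forall.mpr (hmin.mp hq)⟩

/-- **Correspondence of minimizers.**
With `q* = M(r*)`: `q*` minimizes `L^ARM` over all `q` if and only if `r*` minimizes
`r ↦ L^EBM(R_r)` over all `r`; moreover either condition implies that `R_{r*}`
minimizes `L^EBM` over all sequence-level rewards `R : 𝒳 × 𝒴 → ℝ`. -/
theorem correspondence_of_minimizers (X V : Type) [Fintype X] [Fintype V] (T : ℕ)
    (hT : 1 ≤ T) (ρ : X × Resp V T → ℝ) (hρ0 : ∀ p, 0 ≤ ρ p) (hρ1 : ∑ p, ρ p = 1)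
    (rstar qstar : Ctx X V T × Option V → ℝ) (hqstar : qstar = Mmap X V T rstar) :
    ((∀ q : Ctx X V T × Option V → ℝ, LARM X V T ρ qstar ≤ LARM X V T ρ q) ↔
      (∀ r : Ctx X V T × Option V → ℝ,
        LEBM X V T ρ (Rr X V T rstar) ≤ LEBM X V T ρ (Rr X V T r))) ∧
    ((∀ q : Ctx X V T × Option V → ℝ, LARM X V T ρ qstar ≤ LARM X V T ρ q) →
      ∀ R : X × Resp V T → ℝ, LEBM X V T ρ (Rr X V T rstar) ≤ LEBM X V T ρ R) :=
  correspondence_of_minimizers_general X V T ρ rstar qstar hqstar
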